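/- arXiv:2103.03731 — 3 statements merged into one kernel-verified Lean document; each statement's English description precedes it below -/
import Mathlib

section
/- Let n ≥ 1, r₁,…,r_n > 0 with r_n = min_k r_k, let Y₁,…,Y_{n-1} > 0 with Σ_{k<n} Y_k < 1 and Y_n = 1 - Σ_{k<n} Y_k, and set r(Y) = r_n + Σ_{k<n} Y_k (r_k - r_n). Then for any x₁,…,x_{n-1} ∈ ℝ not all zero, the quadratic form Q(x) = (r_n/Y_n)(Σ_k x_k)² + Σ_k (r_k/Y_k) x_k² - (Σ_k x_k (r_k - r_n))² / r(Y) is strictly positive. -/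
/-!
Write `d k = r k - r n ≥ 0`. Splitting `r k / Y k = r n / Y k + d k / Y k`, the form becomes
`(r n / Y n) (∑ x)² + ∑ (r n / Y k) x k²` plus `∑ x k² d k / Y k - (∑ x k d k)² / r(Y)`.
The first two terms are nonnegative and positive respectively, and the last bracket is
nonnegative by Cauchy–Schwarz with weights `d k / Y k` and `Y k d k`, since `r(Y) ≥ ∑ Y k d k`.
-/

open Finset

section WeightedCauchySchwarz

variable {ι : Type*} {s : Finset ι} {x d Y : ι → ℝ}

theorem sq_sum_mul_le_sum_sq_mul_div_mul_sum_mul (hY : ∀ i ∈ s, 0 < Y i)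
    (hd : ∀ i ∈ s, 0 ≤ d i) :
    (∑ i ∈ s, x i * d i) ^ 2 ≤ (∑ i ∈ s, x i ^ 2 * d i / Y i) * ∑ i ∈ s, Y i * d i :=
  sum_sq_le_sum_mul_sum_of_sq_le_mul s
    (fun i hi => div_nonneg (mul_nonneg (sq_nonneg _) (hd i hi)) (hY i hi).le)
    (fun i hi => mul_nonneg (hY i hi).le (hd i hi))
    (fun i hi => le_of_eq (by field_simp [(hY i hi).ne']))

theorem sq_sum_mul_div_add_sum_mul_le (hY : ∀ i ∈ s, 0 < Y i) (hd : ∀ i ∈ s, 0 ≤ d i)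
    {c : ℝ} (hc : 0 ≤ c) :
    (∑ i ∈ s, x i * d i) ^ 2 / (c + ∑ i ∈ s, Y i * d i) ≤ ∑ i ∈ s, x i ^ 2 * d i / Y i := by
  have hYd : 0 ≤ ∑ i ∈ s, Y i * d i := sum_nonneg fun i hi => mul_nonneg (hY i hi).le (hd i hi)
  have hxdY : 0 ≤ ∑ i ∈ s, x i ^ 2 * d i / Y i :=
    sum_nonneg fun i hi => div_nonneg (mul_nonneg (sq_nonneg _) (hd i hi)) (hY i hi).le
  refine div_le_of_le_mul₀ (by positivity) hxdY ?_
  calc (∑ i ∈ s, x i * d i) ^ 2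
      ≤ (∑ i ∈ s, x i ^ 2 * d i / Y i) * ∑ i ∈ s, Y i * d i :=
        sq_sum_mul_le_sum_sq_mul_div_mul_sum_mul hY hd
    _ ≤ (∑ i ∈ s, x i ^ 2 * d i / Y i) * (c + ∑ i ∈ s, Y i * d i) := by gcongr; linarith

end WeightedCauchySchwarz

theorem sum_div_mul_sq_pos {ι : Type*} [Fintype ι] {c : ℝ} {Y x : ι → ℝ} (hc : 0 < c)
    (hY : ∀ i, 0 < Y i) (hx : x ≠ 0) : 0 < ∑ i, c / Y i * x i ^ 2 := by
  obtain ⟨i, hi⟩ := Function.ne_iff.1 hx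
  exact sum_pos' (fun j _ => mul_nonneg (div_nonneg hc.le (hY j).le) (sq_nonneg _))
    ⟨i, mem_univ _, mul_pos (div_pos hc (hY i)) (pow_two_pos_of_ne_zero hi)⟩

/-- Positivity of the quadratic form
`Q(x) = (r_n/Y_n)(Σ x_k)² + Σ_k (r_k/Y_k) x_k² - (Σ_k x_k (r_k - r_n))² / r(Y)`
used in the strict convexity proof of the relaxation entropy, where `r_n = min_k r_k`,
`Y_k > 0`, `Σ_{k<n} Y_k < 1`, `Y_n = 1 - Σ_{k<n} Y_k` and
`r(Y) = r_n + Σ_{k<n} Y_k (r_k - r_n)`. -/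
theorem stmt_9 (m : ℕ) (r : Fin (m + 1) → ℝ) (hr : ∀ k, 0 < r k)
    (hmin : ∀ k, r (Fin.last m) ≤ r k)
    (Y : Fin m → ℝ) (hY : ∀ k, 0 < Y k) (hYsum : ∑ k, Y k < 1)
    (x : Fin m → ℝ) (hx : x ≠ 0) :
    0 < (r (Fin.last m) / (1 - ∑ k, Y k)) * (∑ k, x k) ^ 2 +
        (∑ k, (r k.castSucc / Y k) * (x k) ^ 2) -
        (∑ k, x k * (r k.castSucc - r (Fin.last m))) ^ 2 /
          (r (Fin.last m) + ∑ k, Y k * (r k.castSucc - r (Fin.last m))) := by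
  set rn := r (Fin.last m)
  have hrn : 0 < rn := hr _
  have hYn : 0 < 1 - ∑ k, Y k := by linarith
  have hsplit : ∑ k, r k.castSucc / Y k * x k ^ 2
      = ∑ k, rn / Y k * x k ^ 2 + ∑ k, x k ^ 2 * (r k.castSucc - rn) / Y k := by
    rw [← sum_add_distrib]
    refine sum_congr rfl fun k _ => ?_
    field_simp [(hY k).ne']
    ring
  have hCS := sq_sum_mul_div_add_sum_mul_le (s := univ) (x := x)
    (fun k _ => hY k) (fun k _ => sub_nonneg.2 (hmin k.castSucc)) hrn.le
  have hpos := sum_div_mul_sq_pos hrn hY hx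
  have hfirst : 0 ≤ rn / (1 - ∑ k, Y k) * (∑ k, x k) ^ 2 := by positivity
  linarith
end

section
/- Let γ > γ_m > 1, r > 0 and consider the ODE system on (0,∞)²: d e_r/dt = (e_s - F(e_r))/ε, d e_s/dt = -(e_s - F(e_r))/ε, where F(e_r) = ((γ-γ_m)/(γ_m-1)) e_r and ε > 0. Then e_r + e_s is conserved, and along solutions the quantity ς(e_r, e_s) = C_v ln( ((γ-γ_m)/(γ-1))·((e_r+e_s)/e_s)·( ((γ_m-1)/(γ-γ_m))·(e_s/e_r) )^{(γ_m-1)/(γ-1)} ) satisfies dς/dt = -(1/ε)·(r/((γ-1) e_r e_s))·(e_s - F(e_r))² ≤ 0, with equality if and only if e_s = F(e_r). -/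
/-!
Since `ė_r = -ė_s`, the total energy is conserved. Taking logarithms,
`ς = C_v (log (e_r + e_s) - log e_s + p (log e_s - log e_r)) + const` with `p = (γ_m - 1)/(γ - 1)`,
so along a flow with `ė_r = D = -ė_s` one gets `dς/dt = C_v D (e_r - p (e_r + e_s)) / (e_r e_s)`.
The key identity `e_r - p (e_r + e_s) = -((γ_m - 1)/(γ - 1)) (e_s - F(e_r))`, together with
`D = (e_s - F(e_r))/ε` and `r = C_v (γ_m - 1)`, turns this into a negative multiple of a square.
-/

open Real

lemma add_eq_add_of_hasDerivAt_neg {f g D : ℝ → ℝ} (hf : ∀ t, HasDerivAt f (D t) t)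
    (hg : ∀ t, HasDerivAt g (-D t) t) (s t : ℝ) : f s + g s = f t + g t := by
  have hsum : ∀ t, HasDerivAt (fun t => f t + g t) 0 t := fun t => by
    simpa only [add_neg_cancel] using (hf t).fun_add (hg t)
  exact is_const_of_deriv_eq_zero (fun t => (hsum t).differentiableAt) (fun t => (hsum t).deriv) s t

lemma log_mul_div_mul_rpow {A B a b : ℝ} (p : ℝ) (hA : 0 < A) (hB : 0 < B) (ha : 0 < a)
    (hb : 0 < b) :
    log (A * ((a + b) / b) * (B * (b / a)) ^ p) =
      log A + log (a + b) - log b + p * (log B + log b - log a) := by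
  have hBba : 0 < B * (b / a) := by positivity
  rw [log_mul (by positivity) (by positivity), log_rpow hBba, log_mul hA.ne' (by positivity),
    log_div (by positivity) hb.ne', log_mul hB.ne' (by positivity), log_div hb.ne' ha.ne']
  ring

lemma hasDerivAt_log_mul_div_mul_rpow {a b : ℝ → ℝ} {A B D t : ℝ} (p : ℝ) (hA : 0 < A)
    (hB : 0 < B) (hpos : ∀ s, 0 < a s ∧ 0 < b s) (ha : HasDerivAt a D t)
    (hb : HasDerivAt b (-D) t) :
    HasDerivAt (fun s => log (A * ((a s + b s) / b s) * (B * (b s / a s)) ^ p))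
      (D * (a t - p * (a t + b t)) / (a t * b t)) t := by
  obtain ⟨hat, hbt⟩ := hpos t
  have hsplit : (fun s => log (A * ((a s + b s) / b s) * (B * (b s / a s)) ^ p)) =
      fun s => log A + log (a s + b s) - log (b s) + p * (log B + log (b s) - log (a s)) :=
    funext fun s => log_mul_div_mul_rpow p hA hB (hpos s).1 (hpos s).2
  have hlog_sum : HasDerivAt (fun s => log (a s + b s)) ((D + -D) / (a t + b t)) t :=
    (ha.add hb).log (add_pos hat hbt).ne'
  have hderiv := ((hlog_sum.const_add (log A)).fun_sub (hb.log hbt.ne')).fun_add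
    ((((hb.log hbt.ne').const_add (log B)).fun_sub (ha.log hat.ne')).const_mul p)
  rw [hsplit]
  refine hderiv.congr_deriv ?_
  field_simp
  ring

lemma relaxation_entropy_production_eq {γ γm Cv ε a b : ℝ} (hγ : γ - 1 ≠ 0)
    (hγm : γm - 1 ≠ 0) :
    Cv * ((b - (γ - γm) / (γm - 1) * a) / ε * (a - (γm - 1) / (γ - 1) * (a + b)) / (a * b)) =
      -(1 / ε) * (Cv * (γm - 1) / ((γ - 1) * a * b)) * (b - (γ - γm) / (γm - 1) * a) ^ 2 := by
  rcases eq_or_ne ε 0 with rfl | hε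
  · simp
  rcases eq_or_ne a 0 with rfl | ha
  · simp
  rcases eq_or_ne b 0 with rfl | hb
  · simp
  field_simp
  ring

/-- H-theorem for the spatially homogeneous energy relaxation ODE system: `e_r + e_s` is
conserved, and the relaxation entropy correction `ς` decreases in time with
`dς/dt = -(1/ε)(r/((γ-1) e_r e_s))(e_s - F(e_r))² ≤ 0`, vanishing iff `e_s = F(e_r)`. -/
theorem stmt_11 (γ γm r Cv ε : ℝ) (h1 : 1 < γm) (h2 : γm < γ)
    (hr : 0 < r) (hCv : 0 < Cv) (hγm : γm = r / Cv + 1) (hε : 0 < ε)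
    (er es : ℝ → ℝ) (hpos : ∀ t, 0 < er t ∧ 0 < es t)
    (hODEr : ∀ t, HasDerivAt er ((es t - ((γ - γm) / (γm - 1)) * er t) / ε) t)
    (hODEs : ∀ t, HasDerivAt es (-((es t - ((γ - γm) / (γm - 1)) * er t) / ε)) t) :
    (∀ t : ℝ, er t + es t = er 0 + es 0) ∧
    ∀ t : ℝ,
      HasDerivAt
        (fun t : ℝ => Cv * Real.log (((γ - γm) / (γ - 1)) * ((er t + es t) / es t) *
          (((γm - 1) / (γ - γm)) * (es t / er t)) ^ ((γm - 1) / (γ - 1))))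
        (-(1 / ε) * (r / ((γ - 1) * er t * es t)) *
          (es t - ((γ - γm) / (γm - 1)) * er t) ^ 2) t ∧
      (-(1 / ε) * (r / ((γ - 1) * er t * es t)) *
          (es t - ((γ - γm) / (γm - 1)) * er t) ^ 2 ≤ 0) ∧
      (-(1 / ε) * (r / ((γ - 1) * er t * es t)) *
          (es t - ((γ - γm) / (γm - 1)) * er t) ^ 2 = 0 ↔
        es t = ((γ - γm) / (γm - 1)) * er t) := by
  refine ⟨fun t => add_eq_add_of_hasDerivAt_neg hODEr hODEs t 0, fun t => ?_⟩
  obtain ⟨hert, hest⟩ := hpos t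
  have hr_eq : r = Cv * (γm - 1) := by
    rw [hγm, add_sub_cancel_right, mul_div_cancel₀ _ hCv.ne']
  have hγ1 : 0 < γ - 1 := by linarith
  have hderiv := (hasDerivAt_log_mul_div_mul_rpow ((γm - 1) / (γ - 1))
    (div_pos (sub_pos.2 h2) hγ1) (div_pos (sub_pos.2 h1) (sub_pos.2 h2)) hpos
    (hODEr t) (hODEs t)).const_mul Cv
  rw [relaxation_entropy_production_eq hγ1.ne' (sub_pos.2 h1).ne', ← hr_eq] at hderiv
  have hrate : 0 < 1 / ε * (r / ((γ - 1) * er t * es t)) := by positivity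
  refine ⟨hderiv, ?_, ?_⟩
  · rw [neg_mul]
    exact mul_nonpos_of_nonpos_of_nonneg (neg_nonpos.2 hrate.le) (sq_nonneg _)
  · rw [neg_mul, mul_eq_zero, neg_eq_zero, pow_eq_zero_iff two_ne_zero, sub_eq_zero]
    exact or_iff_right hrate.ne'
end

section
/- Let γ > γ_m > 1. Fix e_t > 0. Among all pairs (e_r, e_s) with e_r > 0, e_s > 0 and e_r + e_s = e_t, the function ς(e_r, e_s) = C_v ln( ((γ-γ_m)/(γ-1))·(e_t/e_s)·( ((γ_m-1)/(γ-γ_m))·(e_s/e_r) )^{(γ_m-1)/(γ-1)} ) with C_v > 0 attains its unique global minimum, equal to 0, at e_r = ((γ_m-1)/(γ-1)) e_t, e_s = ((γ-γ_m)/(γ-1)) e_t, and ς > 0 elsewhere. -/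
/-!
With `a = (γ_m - 1)/(γ - 1)` and `b = (γ - γ_m)/(γ - 1)` one has `a + b = 1`, and `ς / C_v`
unfolds to the relative entropy `a log (a / x) + b log (b / y)` of the splitting fractions
`x = e_r / e_t`, `y = e_s / e_t` (so `x + y = 1`) with respect to `(a, b)`. Gibbs' inequality,
here just `log u ≥ 1 - 1/u` applied to both terms, makes it nonnegative, with equality only
at `x = a`.
-/

open Real

lemma one_sub_div_lt_log_div {c r : ℝ} (hc : 0 < c) (hr : 0 < r) (hne : r ≠ c) :
    1 - r / c < log (c / r) := by
  have hrc : r / c ≠ 1 := by rwa [Ne, div_eq_one_iff_eq hc.ne']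
  have h := log_lt_sub_one_of_pos (div_pos hr hc) hrc
  rw [log_div hr.ne' hc.ne'] at h
  rw [log_div hc.ne' hr.ne']
  linarith

/-- Strict Gibbs' inequality for two-point distributions of equal mass. -/
lemma mul_log_div_add_mul_log_div_pos {a b x y : ℝ} (ha : 0 < a) (hb : 0 < b) (hx : 0 < x)
    (hy : 0 < y) (hsum : x + y = a + b) (hne : x ≠ a) :
    0 < a * log (a / x) + b * log (b / y) := by
  have hy_ne : y ≠ b := fun h => hne (by linarith)
  have hxa : a * (1 - x / a) < a * log (a / x) :=
    mul_lt_mul_of_pos_left (one_sub_div_lt_log_div ha hx hne) ha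
  have hyb : b * (1 - y / b) < b * log (b / y) :=
    mul_lt_mul_of_pos_left (one_sub_div_lt_log_div hb hy hy_ne) hb
  rw [mul_one_sub, mul_div_cancel₀ _ ha.ne'] at hxa
  rw [mul_one_sub, mul_div_cancel₀ _ hb.ne'] at hyb
  linarith

lemma log_mul_div_mul_rpow_eq {a b t x y : ℝ} (ha : 0 < a) (hb : 0 < b) (ht : 0 < t)
    (hx : 0 < x) (hy : 0 < y) (hab : a + b = 1) :
    log (b * (t / y) * ((a / b) * (y / x)) ^ a) = a * log (a * t / x) + b * log (b * t / y) := by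
  rw [log_mul (by positivity) (by positivity), log_rpow (by positivity),
    log_mul hb.ne' (by positivity), log_mul (by positivity) (by positivity),
    log_div ha.ne' hb.ne', log_div ht.ne' hy.ne', log_div hy.ne' hx.ne',
    log_div (by positivity) hx.ne', log_div (by positivity) hy.ne',
    log_mul ha.ne' ht.ne', log_mul hb.ne' ht.ne']
  linear_combination (log y - log b - log t) * hab

/-- Variational (Gibbs-lemma) principle: among all splittings `e_t = e_r + e_s` with
`e_r, e_s > 0`, the entropy correction `ς` attains its unique global minimum, equal to `0`,
at the Maxwellian equilibrium `e_r = ((γ_m-1)/(γ-1)) e_t`, `e_s = ((γ-γ_m)/(γ-1)) e_t`,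
and `ς > 0` elsewhere. -/
theorem stmt_12 (γ γm Cv et : ℝ) (h1 : 1 < γm) (h2 : γm < γ) (hCv : 0 < Cv)
    (het : 0 < et) :
    (Cv * Real.log (((γ - γm) / (γ - 1)) * (et / (((γ - γm) / (γ - 1)) * et)) *
        (((γm - 1) / (γ - γm)) * ((((γ - γm) / (γ - 1)) * et) / (((γm - 1) / (γ - 1)) * et)))
          ^ ((γm - 1) / (γ - 1))) = 0) ∧
    ∀ er es : ℝ, 0 < er → 0 < es → er + es = et →
      (er, es) ≠ (((γm - 1) / (γ - 1)) * et, ((γ - γm) / (γ - 1)) * et) →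
      0 < Cv * Real.log (((γ - γm) / (γ - 1)) * (et / es) *
        (((γm - 1) / (γ - γm)) * (es / er)) ^ ((γm - 1) / (γ - 1))) := by
  set a := (γm - 1) / (γ - 1)
  set b := (γ - γm) / (γ - 1)
  have ha : 0 < a := div_pos (by linarith) (by linarith)
  have hb : 0 < b := div_pos (by linarith) (by linarith)
  have hab : a + b = 1 := by rw [← add_div, div_eq_one_iff_eq] <;> linarith
  have hratio : (γm - 1) / (γ - γm) = a / b :=
    (div_div_div_cancel_right₀ (by linarith) _ _).symm
  rw [hratio]
  refine ⟨?_, fun er es her hes hsum hne => ?_⟩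
  · rw [log_mul_div_mul_rpow_eq ha hb het (by positivity) (by positivity) hab,
      div_self (by positivity), div_self (by positivity)]
    simp
  · have her_ne : er ≠ a * et := fun h =>
      hne (Prod.ext h (by linear_combination hsum - h - et * hab))
    rw [log_mul_div_mul_rpow_eq ha hb het her hes hab,
      ← div_div_eq_mul_div, ← div_div_eq_mul_div]
    refine mul_pos hCv (mul_log_div_add_mul_log_div_pos ha hb (by positivity) (by positivity) ?_ ?_)
    · rw [← add_div, hsum, div_self het.ne', hab]
    · rwa [Ne, div_eq_iff het.ne']
end
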